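/- Let Q_0 be a probability measure on 𝔻^∞ such that for every n ≥ 0 and every bounded Borel f : 𝔻^{n+1} → ℝ, ∫ f(α_0, …, α_n) dQ_0(α) = E_Q[ f(α_0, …, α_n) · |φ_{n+1}(1)|^{-2} ]. Then the pushforward of Q_0 under the map α ↦ (γ_k)_{k≥0} (the modified Verblunsky coefficients) is the product measure on 𝔻^∞ whose k-th marginal is the size-biased law P_𝔻(z,1) Λ_k(dz), where Λ_k is the law of α_k under Q. In particular, under Q_0 the modified Verblunsky coefficients (γ_k) are mutually independent with Q_0(γ_k ∈ dz) = P_𝔻(z,1) Q(γ_k ∈ dz). -/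

import Mathlib

/-!
At `z = 1` the Szegő recursion is diagonal: `φ_n(1) = B_n(1) φ_n^*(1)` with `|B_n(1)| = 1`, and
`φ_{n+1}^*(1) = ρ_n⁻¹ φ_n^*(1) (1 - γ_n)`, so `|φ_n(1)|⁻² = ∏_{k<n} P_𝔻(γ_k, 1)`.
The map `(α_0, …, α_{n-1}) ↦ (γ_0, …, γ_{n-1})` is triangular, `γ_n = α_n B_n(1)` with `B_n(1)` a
unimodular function of `α_0, …, α_{n-1}`; being a skew product of rotations, it preserves the
product of rotation invariant laws. Hence under `Q` the `γ_k` have the same joint law as the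
`α_k`, and the density `|φ_{n+1}(1)|⁻²` of `Q_0` becomes the product density `∏ P_𝔻(z_k, 1)`
in the coordinates `γ`.
-/

open Complex Finset

/-- `ρ_k = √(1 − |α_k|²)`. -/
noncomputable def rhoV (α : ℕ → ℂ) (k : ℕ) : ℝ :=
  Real.sqrt (1 - ‖α k‖ ^ 2)

/-- The coupled Szegő recursion for the *normalized* orthogonal polynomials:
`szego α n z = (φ_n(z), φ_n^*(z))` where `φ_0 = φ_0^* = 1`,
`φ_{n+1}(z) = ρ_n⁻¹ (z φ_n(z) − conj(α_n) φ_n^*(z))` and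
`φ_{n+1}^*(z) = ρ_n⁻¹ (φ_n^*(z) − α_n z φ_n(z))`. -/
noncomputable def szego (α : ℕ → ℂ) : ℕ → ℂ → ℂ × ℂ
  | 0, _ => (1, 1)
  | n + 1, z =>
    let p := szego α n z
    (((rhoV α n : ℂ))⁻¹ * (z * p.1 - (starRingEnd ℂ) (α n) * p.2),
      ((rhoV α n : ℂ))⁻¹ * (p.2 - α n * z * p.1))

/-- `φ_n(z; α)`, the `n`-th normalized Szegő polynomial. -/
noncomputable def phiN (α : ℕ → ℂ) (n : ℕ) (z : ℂ) : ℂ := (szego α n z).1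

/-- `φ_n^*(z; α)`, the `n`-th reversed normalized Szegő polynomial. -/
noncomputable def phiNStar (α : ℕ → ℂ) (n : ℕ) (z : ℂ) : ℂ := (szego α n z).2

/-- `ψ_n(z; α)`, the `n`-th second kind polynomial: same recursion with `α` replaced by `−α`. -/
noncomputable def psiN (α : ℕ → ℂ) (n : ℕ) (z : ℂ) : ℂ := phiN (fun k => -(α k)) n z

/-- The Prüfer/Blaschke quantities: `B_0(z) = z`,
`B_{n+1}(z) = z B_n(z) (1 − conj(α_n B_n(z)))/(1 − α_n B_n(z))`. -/
noncomputable def BV (α : ℕ → ℂ) : ℕ → ℂ → ℂ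
  | 0, z => z
  | n + 1, z =>
    z * BV α n z *
      ((1 - (starRingEnd ℂ) (α n * BV α n z)) / (1 - α n * BV α n z))

/-- The modified Verblunsky coefficients `γ_k = α_k B_k(1)`. -/
noncomputable def gammaV (α : ℕ → ℂ) (k : ℕ) : ℂ := α k * BV α k 1

/-- The Poisson kernel of the unit disk at the boundary point `1`:
`P_𝔻(z,1) = (1 − |z|²)/|1 − z|²`. -/
noncomputable def poissonD (z : ℂ) : ℝ :=
  (1 - ‖z‖ ^ 2) / ‖1 - z‖ ^ 2

/-- The recursion `X_{-1} = 0`, `Y_{-1} = 1`,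
`X_n = X_{n-1} + 2 Y_{n-1} Im(γ_n/(1−γ_n))`, `Y_n = Y_{n-1} (1 + 2 Re(γ_n/(1−γ_n)))`:
`XY γ (n+1) = (X_n, Y_n)` and `XY γ 0 = (X_{-1}, Y_{-1})`. -/
noncomputable def XY (γ : ℕ → ℂ) : ℕ → ℝ × ℝ
  | 0 => (0, 1)
  | n + 1 =>
    let p := XY γ n
    (p.1 + 2 * p.2 * (γ n / (1 - γ n)).im, p.2 * (1 + 2 * (γ n / (1 - γ n)).re))

open MeasureTheory ProbabilityTheory Filter

open scoped ENNReal

lemma norm_one_sub_conj_div_one_sub {w : ℂ} (hw : w ≠ 1) :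
    ‖(1 - (starRingEnd ℂ) w) / (1 - w)‖ = 1 := by
  have hconj : 1 - (starRingEnd ℂ) w = (starRingEnd ℂ) (1 - w) := by simp
  rw [hconj, norm_div, Complex.norm_conj, div_self (norm_ne_zero_iff.2 (sub_ne_zero.2 hw.symm))]

section MeasureLemmas

variable {Ω E : Type*} [MeasurableSpace Ω] [MeasurableSpace E]

instance isProbabilityMeasure_map_eval {ι : Type*} {X : ι → Type*} [∀ i, MeasurableSpace (X i)]
    (μ : Measure (∀ i, X i)) [IsProbabilityMeasure μ] (i : ι) :
    IsProbabilityMeasure (μ.map fun x => x i) :=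
  Measure.isProbabilityMeasure_map (measurable_pi_apply i).aemeasurable

lemma map_withDensity_comp {μ : Measure Ω} {X : Ω → E} (hX : Measurable X) {f : E → ℝ≥0∞}
    (hf : Measurable f) : (μ.withDensity (f ∘ X)).map X = (μ.map X).withDensity f := by
  ext s hs
  rw [Measure.map_apply hX hs, withDensity_apply _ (hX hs), withDensity_apply _ hs,
    setLIntegral_map hs hf hX]
  rfl

lemma map_eq_map_withDensity_of_integral_comp_eq {μ ν : Measure Ω} [IsProbabilityMeasure ν]
    {X : Ω → E} (hX : Measurable X) {w : Ω → ℝ} (hw0 : ∀ ω, 0 ≤ w ω)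
    (h : ∀ f : E → ℝ, Measurable f → (∃ C : ℝ, ∀ x, |f x| ≤ C) →
      ∫ ω, f (X ω) ∂ν = ∫ ω, f (X ω) * w ω ∂μ) :
    ν.map X = (μ.withDensity fun ω => ENNReal.ofReal (w ω)).map X := by
  have hw_int : Integrable w μ := by
    by_contra hw_int
    simpa [integral_undef hw_int] using h (fun _ => 1) measurable_const ⟨1, fun _ => by simp⟩
  ext T hT
  have hS := hX hT
  have hind : ∀ ω, T.indicator (1 : E → ℝ) (X ω) = (X ⁻¹' T).indicator 1 ω := fun ω => rfl
  have key := h (T.indicator 1) (measurable_one.indicator hT)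
    ⟨1, fun x => by by_cases hx : x ∈ T <;> simp [hx]⟩
  simp only [hind, ← Set.indicator_mul_left, Pi.one_apply, one_mul, integral_indicator_one hS,
    integral_indicator hS] at key
  rw [Measure.map_apply hX hT, Measure.map_apply hX hT, withDensity_apply _ hS,
    ← ofReal_integral_eq_lintegral_ofReal hw_int.integrableOn (ae_of_all _ hw0), ← key,
    measureReal_def, ENNReal.ofReal_toReal (measure_ne_top _ _)]

lemma indicator_univ_pi_prod {ι M : Type*} [Fintype ι] [CommMonoidWithZero M] {X : ι → Type*}
    (s : ∀ i, Set (X i)) (f : ∀ i, X i → M) (x : ∀ i, X i) :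
    (Set.univ.pi s).indicator (fun x => ∏ i, f i (x i)) x = ∏ i, (s i).indicator (f i) (x i) := by
  by_cases hx : x ∈ Set.univ.pi s
  · rw [Set.indicator_of_mem hx]
    exact Finset.prod_congr rfl fun i _ => (Set.indicator_of_mem (hx i trivial) _).symm
  · obtain ⟨i, hi⟩ : ∃ i, x i ∉ s i := by simpa using hx
    rw [Set.indicator_of_notMem hx]
    exact (Finset.prod_eq_zero (Finset.mem_univ i) (Set.indicator_of_notMem hi _)).symm

theorem MeasureTheory.Measure.pi_withDensity_ofReal {ι : Type*} [Fintype ι] {X : ι → Type*}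
    [∀ i, MeasurableSpace (X i)] {μ : ∀ i, Measure (X i)} [∀ i, IsProbabilityMeasure (μ i)]
    {g : ∀ i, X i → ℝ} (hg : ∀ i, Measurable (g i)) :
    (Measure.pi μ).withDensity (fun x => ∏ i, ENNReal.ofReal (g i (x i))) =
      Measure.pi fun i => (μ i).withDensity fun z => ENNReal.ofReal (g i z) := by
  refine (Measure.pi_eq fun s hs => ?_).symm
  have hmeas : ∀ i, Measurable ((s i).indicator fun z => ENNReal.ofReal (g i z)) :=
    fun i => (hg i).ennreal_ofReal.indicator (hs i)
  rw [withDensity_apply _ (MeasurableSet.univ_pi hs),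
    ← lintegral_indicator (MeasurableSet.univ_pi hs),
    lintegral_congr fun x => indicator_univ_pi_prod s (fun i z => ENNReal.ofReal (g i z)) x]
  refine (lintegral_prod_eq_prod_lintegral_of_indepFun Finset.univ
    (fun i (x : ∀ i, X i) => (s i).indicator (fun z => ENNReal.ofReal (g i z)) (x i))
    (iIndepFun_pi fun i => (hmeas i).aemeasurable)
    fun i => (hmeas i).comp (measurable_pi_apply i)).trans (Finset.prod_congr rfl fun i _ => ?_)
  rw [withDensity_apply _ (hs i), ← lintegral_indicator (hs i),
    ← (measurePreserving_eval μ i).lintegral_comp (hmeas i)]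

lemma map_eq_of_map_eq_pi {n : ℕ} {μ : Measure Ω} {X : Fin n → Ω → E} (hX : ∀ i, Measurable (X i))
    {ν : Fin n → Measure E} [∀ i, IsProbabilityMeasure (ν i)]
    (h : μ.map (fun ω i => X i ω) = Measure.pi ν) (i : Fin n) : μ.map (X i) = ν i := by
  rw [← (measurePreserving_eval ν i).map_eq, ← h, Measure.map_map (measurable_pi_apply i)
    (measurable_pi_lambda _ hX)]
  rfl

lemma iIndepFun_of_forall_fin {μ : Measure Ω} {X : ℕ → Ω → E}
    (h : ∀ n, iIndepFun (fun i : Fin n => X i) μ) : iIndepFun X μ := by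
  refine iIndepFun_iff_finset.2 fun s => ?_
  have hlt : ∀ k ∈ s, k < s.sup id + 1 := fun k hk => Nat.lt_succ_of_le (Finset.le_sup (f := id) hk)
  exact (h (s.sup id + 1)).precomp (g := fun k : s => ⟨k, hlt k k.2⟩)
    fun a b hab => Subtype.ext (congrArg Fin.val hab)

end MeasureLemmas

lemma eq_one_of_forall_prod_range_eq_one {M : Type*} [CommMonoid M] {c : ℕ → M}
    (h : ∀ n, ∏ i ∈ range n, c i = 1) (k : ℕ) : c k = 1 := by
  simpa [prod_range_succ, h k] using h (k + 1)

lemma isProbabilityMeasure_of_forall_pi {E : Type*} [MeasurableSpace E] {ν : ℕ → Measure E}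
    [∀ k, SigmaFinite (ν k)] (h : ∀ n, IsProbabilityMeasure (Measure.pi fun i : Fin n => ν i))
    (k : ℕ) : IsProbabilityMeasure (ν k) :=
  ⟨eq_one_of_forall_prod_range_eq_one (c := fun i => ν i Set.univ) (fun n => by
    rw [← Fin.prod_univ_eq_prod_range, ← Measure.pi_univ, measure_univ]) k⟩

section Szego

variable {α β : ℕ → ℂ}

lemma BV_congr {n : ℕ} (z : ℂ) (h : ∀ k < n, α k = β k) : BV α n z = BV β n z := by
  induction n with
  | zero => rfl
  | succ n ih => simp only [BV, ih fun k hk => h k (by omega), h n n.lt_succ_self]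

lemma gammaV_congr {k : ℕ} (h : ∀ j ≤ k, α j = β j) : gammaV α k = gammaV β k := by
  rw [gammaV, gammaV, h k le_rfl, BV_congr 1 fun j hj => h j hj.le]

lemma norm_BV_one (hα : ∀ k, ‖α k‖ < 1) (n : ℕ) : ‖BV α n 1‖ = 1 := by
  induction n with
  | zero => simp [BV]
  | succ n ih =>
    have hne : α n * BV α n 1 ≠ 1 := fun h => by
      simpa [ih, (hα n).ne] using congrArg norm h
    rw [BV, norm_mul, norm_mul, ih, norm_one_sub_conj_div_one_sub hne, norm_one]; norm_num

lemma norm_gammaV (hα : ∀ k, ‖α k‖ < 1) (k : ℕ) : ‖gammaV α k‖ = ‖α k‖ := by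
  rw [gammaV, norm_mul, norm_BV_one hα, mul_one]

lemma gammaV_ne_one (hα : ∀ k, ‖α k‖ < 1) (k : ℕ) : gammaV α k ≠ 1 := fun h =>
  (hα k).ne (by rw [← norm_gammaV hα k, h, norm_one])

lemma BV_succ_one_mul (hα : ∀ k, ‖α k‖ < 1) (n : ℕ) :
    BV α (n + 1) 1 * (1 - gammaV α n) = BV α n 1 - (starRingEnd ℂ) (α n) := by
  have hB : BV α n 1 * (starRingEnd ℂ) (BV α n 1) = 1 := by
    rw [Complex.mul_conj, Complex.normSq_eq_norm_sq, norm_BV_one hα]; norm_num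
  have hne : 1 - α n * BV α n 1 ≠ 0 := sub_ne_zero.2 (gammaV_ne_one hα n).symm
  rw [BV, mul_assoc, gammaV, div_mul_cancel₀ _ hne, map_mul]
  linear_combination -(starRingEnd ℂ) (α n) * hB

lemma phiN_succ (n : ℕ) (z : ℂ) : phiN α (n + 1) z =
    (rhoV α n : ℂ)⁻¹ * (z * phiN α n z - (starRingEnd ℂ) (α n) * phiNStar α n z) := rfl

lemma phiNStar_succ (n : ℕ) (z : ℂ) :
    phiNStar α (n + 1) z = (rhoV α n : ℂ)⁻¹ * (phiNStar α n z - α n * z * phiN α n z) := rfl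

lemma phiN_one_eq_BV_mul (hα : ∀ k, ‖α k‖ < 1) (n : ℕ) :
    phiN α n 1 = BV α n 1 * phiNStar α n 1 := by
  induction n with
  | zero => simp [phiN, phiNStar, szego, BV]
  | succ n ih =>
    have hB := BV_succ_one_mul hα n
    rw [gammaV] at hB
    rw [phiN_succ, phiNStar_succ, ih]
    linear_combination (rhoV α n : ℂ)⁻¹ * phiNStar α n 1 * hB.symm

lemma phiNStar_succ_one (hα : ∀ k, ‖α k‖ < 1) (n : ℕ) :
    phiNStar α (n + 1) 1 = (rhoV α n : ℂ)⁻¹ * (phiNStar α n 1 * (1 - gammaV α n)) := by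
  rw [phiNStar_succ, phiN_one_eq_BV_mul hα, gammaV]
  ring

lemma rhoV_nonneg (α : ℕ → ℂ) (k : ℕ) : 0 ≤ rhoV α k := Real.sqrt_nonneg _

lemma poissonD_gammaV (hα : ∀ k, ‖α k‖ < 1) (k : ℕ) :
    poissonD (gammaV α k) = rhoV α k ^ 2 / ‖1 - gammaV α k‖ ^ 2 := by
  rw [poissonD, norm_gammaV hα, rhoV, Real.sq_sqrt (by nlinarith [hα k, norm_nonneg (α k)])]

lemma poissonD_gammaV_nonneg (hα : ∀ k, ‖α k‖ < 1) (k : ℕ) : 0 ≤ poissonD (gammaV α k) := by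
  rw [poissonD_gammaV hα]
  positivity

lemma inv_norm_phiN_one_sq (hα : ∀ k, ‖α k‖ < 1) (n : ℕ) :
    ‖phiN α n 1‖⁻¹ ^ 2 = ∏ i ∈ range n, poissonD (gammaV α i) := by
  rw [phiN_one_eq_BV_mul hα, norm_mul, norm_BV_one hα, one_mul]
  induction n with
  | zero => simp [phiNStar, szego]
  | succ n ih =>
    rw [prod_range_succ, ← ih, poissonD_gammaV hα, phiNStar_succ_one hα, norm_mul, norm_mul,
      norm_inv, Complex.norm_real, Real.norm_of_nonneg (rhoV_nonneg α n)]
    field_simp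

end Szego

section Measurability

lemma measurable_szego (n : ℕ) (z : ℂ) : Measurable fun α : ℕ → ℂ => szego α n z := by
  induction n with
  | zero => exact measurable_const
  | succ n ih =>
    have h1 := ih.fst
    have h2 := ih.snd
    simp only [szego, rhoV]
    fun_prop

lemma measurable_BV (n : ℕ) (z : ℂ) : Measurable fun α : ℕ → ℂ => BV α n z := by
  induction n with
  | zero => exact measurable_const
  | succ n ih =>
    simp only [BV]
    fun_prop

lemma measurable_gammaV (k : ℕ) : Measurable fun α : ℕ → ℂ => gammaV α k := by
  have := measurable_BV k 1
  unfold gammaV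
  fun_prop

lemma measurable_gammaV_fin (n : ℕ) : Measurable fun α : ℕ → ℂ => fun i : Fin n => gammaV α i :=
  measurable_pi_lambda _ fun i => measurable_gammaV i

@[fun_prop]
lemma measurable_poissonD : Measurable poissonD := by
  unfold poissonD
  fun_prop

end Measurability

section FiniteSequences

variable {n : ℕ}

noncomputable def zeroExtend (x : Fin n → ℂ) : ℕ → ℂ := fun k => if h : k < n then x ⟨k, h⟩ else 0

noncomputable def gammaFin (n : ℕ) (x : Fin n → ℂ) : Fin n → ℂ := fun i => gammaV (zeroExtend x) i

lemma measurable_zeroExtend : Measurable (zeroExtend (n := n)) := by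
  refine measurable_pi_lambda _ fun k => ?_
  by_cases h : k < n
  · simpa [zeroExtend, h] using measurable_pi_apply (⟨k, h⟩ : Fin n)
  · simp [zeroExtend, h]

lemma measurable_gammaFin : Measurable (gammaFin n) :=
  measurable_pi_lambda _ fun i => (measurable_gammaV i).comp measurable_zeroExtend

lemma norm_zeroExtend_lt {x : Fin n → ℂ} (hx : ∀ i, ‖x i‖ < 1) (k : ℕ) : ‖zeroExtend x k‖ < 1 := by
  unfold zeroExtend
  split_ifs
  exacts [hx _, by simp]

lemma gammaFin_restrict (α : ℕ → ℂ) :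
    gammaFin n (fun i : Fin n => α i) = fun i : Fin n => gammaV α i := by
  funext i
  exact gammaV_congr fun j hj => by simp [zeroExtend, hj.trans_lt i.2]

lemma init_gammaFin (w : Fin (n + 1) → ℂ) :
    Fin.init (gammaFin (n + 1) w) = gammaFin n (Fin.init w) := by
  funext j
  refine gammaV_congr fun k hk => ?_
  simp [zeroExtend, Fin.init, hk.trans_lt j.2, (hk.trans_lt j.2).trans n.lt_succ_self]

lemma gammaFin_last (w : Fin (n + 1) → ℂ) :
    gammaFin (n + 1) w (Fin.last n) = w (Fin.last n) * BV (zeroExtend (Fin.init w)) n 1 := by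
  rw [gammaFin, gammaV, Fin.val_last, BV_congr (β := zeroExtend (Fin.init w)) 1 fun k hk => by
    simp [zeroExtend, Fin.init, hk, hk.trans n.lt_succ_self]]
  simp [zeroExtend, Fin.last]

end FiniteSequences

def IsRotationInvariant (ν : Measure ℂ) : Prop :=
  ∀ t : ℝ, ν.map (fun z => Complex.exp (t * Complex.I) * z) = ν

lemma IsRotationInvariant.map_mul_left {ν : Measure ℂ} (hν : IsRotationInvariant ν)
    {c : ℂ} (hc : ‖c‖ = 1) : ν.map (c * ·) = ν := by
  have hexp : Complex.exp (Complex.arg c * Complex.I) = c := by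
    simpa [hc] using Complex.norm_mul_exp_arg_mul_I c
  simpa [hexp] using hν (Complex.arg c)

theorem measurePreserving_gammaFin {μ : ℕ → Measure ℂ} [∀ k, SigmaFinite (μ k)]
    (hrot : ∀ k, IsRotationInvariant (μ k)) (hdisk : ∀ k, ∀ᵐ z ∂μ k, ‖z‖ < 1) :
    ∀ n, MeasurePreserving (gammaFin n) (Measure.pi fun i : Fin n => μ i)
      (Measure.pi fun i : Fin n => μ i)
  | 0 => by
    rw [Subsingleton.elim (gammaFin 0) id]
    exact MeasurePreserving.id _
  | n + 1 => by
    set e := (MeasurableEquiv.piFinSuccAbove (fun _ : Fin (n + 1) => ℂ) (Fin.last n)).trans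
      MeasurableEquiv.prodComm
    have he : MeasurePreserving e (Measure.pi fun i : Fin (n + 1) => μ i)
        ((Measure.pi fun i : Fin n => μ i).prod (μ n)) := by
      have h := measurePreserving_piFinSuccAbove (fun i : Fin (n + 1) => μ i) (Fin.last n)
      simp only [Fin.succAbove_last, Fin.val_last, Fin.val_castSucc] at h
      exact Measure.measurePreserving_swap.comp h
    have hunit : ∀ᵐ y ∂(Measure.pi fun i : Fin n => μ i),
        (μ n).map (BV (zeroExtend y) n 1 * ·) = μ n := by
      have hy : ∀ᵐ y ∂(Measure.pi fun i : Fin n => μ i), ∀ j, ‖y j‖ < 1 :=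
        ae_all_iff.2 fun j =>
          (Measure.quasiMeasurePreserving_eval _ j).ae (p := fun z => ‖z‖ < 1) (hdisk j)
      filter_upwards [hy] with y hy
      exact (hrot n).map_mul_left (norm_BV_one (norm_zeroExtend_lt hy) n)
    have hskew := (measurePreserving_gammaFin hrot hdisk n).skew_product
      (((measurable_BV n 1).comp (measurable_zeroExtend.comp measurable_fst)).mul measurable_snd)
      hunit
    have hconj : gammaFin (n + 1) =
        e.symm ∘ (fun p => (gammaFin n p.1, BV (zeroExtend p.1) n 1 * p.2)) ∘ e := by
      funext w
      refine e.eq_symm_apply.2 (Prod.ext ?_ ?_)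
      · simp [e, MeasurableEquiv.prodComm, init_gammaFin]
      · simp [e, MeasurableEquiv.prodComm, gammaFin_last, mul_comm]
    rw [hconj]
    exact (MeasurePreserving.symm e he).comp (hskew.comp he)

noncomputable def sizeBiased (ν : Measure ℂ) : Measure ℂ :=
  ν.withDensity fun z => ENNReal.ofReal (poissonD z)

instance (ν : Measure ℂ) [SigmaFinite ν] : SigmaFinite (sizeBiased ν) :=
  SigmaFinite.withDensity_ofReal _

section VerblunskyLaws

variable {Q : Measure (ℕ → ℂ)} [IsProbabilityMeasure Q]

lemma map_gammaV_fin_eq_pi (hdisk : ∀ᵐ α ∂Q, ∀ k, ‖α k‖ < 1)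
    (hindep : iIndepFun (fun k (α : ℕ → ℂ) => α k) Q)
    (hrot : ∀ k, IsRotationInvariant (Q.map fun α => α k)) (n : ℕ) :
    Q.map (fun α (i : Fin n) => gammaV α i) = Measure.pi fun i : Fin n => Q.map fun α => α i := by
  have hfac : (fun α (i : Fin n) => gammaV α i) = gammaFin n ∘ fun α (i : Fin n) => α i :=
    funext fun α => (gammaFin_restrict α).symm
  have hdisk' : ∀ k, ∀ᵐ z ∂(Q.map fun α => α k), ‖z‖ < 1 := fun k =>
    (ae_map_iff (measurable_pi_apply k).aemeasurable
      (measurableSet_lt (by fun_prop) measurable_const)).2 (hdisk.mono fun α h => h k)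
  rw [hfac, ← Measure.map_map measurable_gammaFin
      (measurable_pi_lambda _ fun i => measurable_pi_apply _),
    (hindep.precomp Fin.val_injective).map_fun_eq_pi_map
      fun i => (measurable_pi_apply _).aemeasurable,
    (measurePreserving_gammaFin hrot hdisk' n).map_eq]

variable {Q0 : Measure (ℕ → ℂ)} [IsProbabilityMeasure Q0]

lemma map_gammaV_fin_eq_pi_sizeBiased (hdisk : ∀ᵐ α ∂Q, ∀ k, ‖α k‖ < 1)
    (hindep : iIndepFun (fun k (α : ℕ → ℂ) => α k) Q)
    (hrot : ∀ k, IsRotationInvariant (Q.map fun α => α k))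
    (hQ0 : ∀ n : ℕ, ∀ f : (Fin (n + 1) → ℂ) → ℝ, Measurable f →
      (∃ C : ℝ, ∀ x, |f x| ≤ C) →
        ∫ α, f (fun i => α i) ∂Q0 =
          ∫ α, f (fun i => α i) * (‖phiN α (n + 1) 1‖)⁻¹ ^ 2 ∂Q) :
    ∀ n, Q0.map (fun α (i : Fin n) => gammaV α i) =
      Measure.pi fun i : Fin n => sizeBiased (Q.map fun α => α i)
  | 0 => by
    rw [Subsingleton.elim (fun α (i : Fin 0) => gammaV α i) fun _ => isEmptyElim,
      Measure.map_const, measure_univ, one_smul, Measure.pi_of_empty]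
  | n + 1 => by
    set Γ := fun α (i : Fin (n + 1)) => gammaV α i
    set W : (Fin (n + 1) → ℂ) → ℝ≥0∞ := fun y => ∏ i, ENNReal.ofReal (poissonD (y i))
    have hΓ : Measurable Γ := measurable_gammaV_fin (n + 1)
    have hweight : (fun α => ENNReal.ofReal (‖phiN α (n + 1) 1‖⁻¹ ^ 2)) =ᵐ[Q] W ∘ Γ := by
      filter_upwards [hdisk] with α hα
      rw [inv_norm_phiN_one_sq hα, ← Fin.prod_univ_eq_prod_range,
        ENNReal.ofReal_prod_of_nonneg (f := fun i : Fin (n + 1) => poissonD (gammaV α i))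
          fun i _ => poissonD_gammaV_nonneg hα i]
      rfl
    calc Q0.map Γ = (Q.withDensity fun α => ENNReal.ofReal (‖phiN α (n + 1) 1‖⁻¹ ^ 2)).map Γ :=
          map_eq_map_withDensity_of_integral_comp_eq hΓ (fun _ => by positivity)
            fun f hf ⟨C, hC⟩ => by
              simpa only [Function.comp_apply, gammaFin_restrict] using
                hQ0 n (f ∘ gammaFin (n + 1)) (hf.comp measurable_gammaFin) ⟨C, fun x => hC _⟩
      _ = (Q.map Γ).withDensity W := by
          rw [withDensity_congr_ae hweight]
          exact map_withDensity_comp hΓ (Finset.measurable_prod _ fun i _ => by fun_prop)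
      _ = _ := by
          rw [map_gammaV_fin_eq_pi hdisk hindep hrot,
            Measure.pi_withDensity_ofReal fun _ => measurable_poissonD]
          rfl

end VerblunskyLaws

/-- If `Q_0` satisfies
`∫ f(α_0,…,α_n) dQ_0 = E_Q[f(α_0,…,α_n) |φ_{n+1}(1)|⁻²]` for all bounded Borel `f`, then the
pushforward of `Q_0` under `α ↦ (γ_k)` is the product of the size-biased laws
`P_𝔻(z,1) Λ_k(dz)` (where `Λ_k` is the law of `α_k` under `Q`): the finite-dimensional
laws are product measures, the `γ_k` are mutually independent under `Q_0`, and
`Q_0(γ_k ∈ dz) = P_𝔻(z,1) Q(γ_k ∈ dz)`. -/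
theorem size_biased_verblunsky
    (Q : Measure (ℕ → ℂ)) [IsProbabilityMeasure Q]
    (hdisk : ∀ᵐ α ∂Q, ∀ k, ‖α k‖ < 1)
    (hindep : iIndepFun (fun k (α : ℕ → ℂ) => α k) Q)
    (hrot : ∀ k (t : ℝ),
      (Q.map (fun α => α k)).map (fun z => Complex.exp (t * Complex.I) * z) =
        Q.map (fun α => α k))
    (Q0 : Measure (ℕ → ℂ)) [IsProbabilityMeasure Q0]
    (hQ0 : ∀ n : ℕ, ∀ f : (Fin (n + 1) → ℂ) → ℝ, Measurable f →
      (∃ C : ℝ, ∀ x, |f x| ≤ C) →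
        ∫ α, f (fun i => α i) ∂Q0 =
          ∫ α, f (fun i => α i) * (‖phiN α (n + 1) 1‖)⁻¹ ^ 2 ∂Q) :
    (∀ n : ℕ,
      Q0.map (fun α => fun i : Fin n => gammaV α i) =
        Measure.pi (fun i : Fin n =>
          (Q.map (fun α => α (i : ℕ))).withDensity
            (fun z => ENNReal.ofReal (poissonD z)))) ∧
    iIndepFun (fun k (α : ℕ → ℂ) => gammaV α k) Q0 ∧
    (∀ k : ℕ,
      Q0.map (fun α => gammaV α k) =
        (Q.map (fun α => gammaV α k)).withDensity
          (fun z => ENNReal.ofReal (poissonD z))) := by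
  have hlaw := map_gammaV_fin_eq_pi_sizeBiased hdisk hindep hrot hQ0
  have := isProbabilityMeasure_of_forall_pi (ν := fun k => sizeBiased (Q.map fun α => α k)) fun n =>
    hlaw n ▸ Measure.isProbabilityMeasure_map (measurable_gammaV_fin n).aemeasurable
  have hmarg0 : ∀ k, Q0.map (fun α => gammaV α k) = sizeBiased (Q.map fun α => α k) := fun k => by
    simpa using map_eq_of_map_eq_pi (fun i => measurable_gammaV i) (hlaw (k + 1)) (Fin.last k)
  have hmarg : ∀ k, Q.map (fun α => gammaV α k) = Q.map fun α => α k := fun k => by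
    simpa using map_eq_of_map_eq_pi (fun i => measurable_gammaV i)
      (map_gammaV_fin_eq_pi hdisk hindep hrot (k + 1)) (Fin.last k)
  refine ⟨hlaw, iIndepFun_of_forall_fin fun n => ?_, fun k => by rw [hmarg0, hmarg]; rfl⟩
  rw [iIndepFun_iff_map_fun_eq_pi_map (f := fun (i : Fin n) α => gammaV α i)
    fun i => (measurable_gammaV i).aemeasurable, hlaw n]
  simp only [hmarg0]
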